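/- A probabilistic hidden-variable team 𝕏 supports probabilistic locality if and only if it supports both probabilistic parameter independence and probabilistic outcome independence. -/
import Mathlib


open Classical in
/-- The marginal probability `|𝕏_φ|`: the sum of `𝕏 s` over all assignments `s`
(of the finite type `Ω`) satisfying the condition `φ`. -/
noncomputable def marg {Ω : Type} [Fintype Ω] (𝕏 : Ω → ℝ) (φ : Ω → Prop) : ℝ :=
  ∑ s ∈ Finset.univ.filter φ, 𝕏 s

/-- Probabilistic locality. -/
def ProbLocality {n : ℕ} {A B C : Type} [Fintype A] [Fintype B] [Fintype C]
    (𝕏 : ((Fin n → A) × (Fin n → B) × C) → ℝ) : Prop :=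
  ∀ (a : Fin n → A) (b : Fin n → B) (γ : C),
    marg 𝕏 (fun s => (∀ j, s.1 j = a j) ∧ (∀ j, s.2.1 j = b j) ∧ s.2.2 = γ) *
        ∏ i : Fin n, marg 𝕏 (fun s => s.1 i = a i ∧ s.2.2 = γ) =
      marg 𝕏 (fun s => (∀ j, s.1 j = a j) ∧ s.2.2 = γ) *
        ∏ i : Fin n, marg 𝕏 (fun s => s.1 i = a i ∧ s.2.1 i = b i ∧ s.2.2 = γ)

/-- Probabilistic parameter independence. -/
def ProbParameterIndependence {n : ℕ} {A B C : Type} [Fintype A] [Fintype B] [Fintype C]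
    (𝕏 : ((Fin n → A) × (Fin n → B) × C) → ℝ) : Prop :=
  ∀ (i : Fin n) (a : Fin n → A) (b : B) (γ : C),
    marg 𝕏 (fun s => (∀ j, s.1 j = a j) ∧ s.2.2 = γ) *
        marg 𝕏 (fun s => s.1 i = a i ∧ s.2.1 i = b ∧ s.2.2 = γ) =
      marg 𝕏 (fun s => (∀ j, s.1 j = a j) ∧ s.2.1 i = b ∧ s.2.2 = γ) *
        marg 𝕏 (fun s => s.1 i = a i ∧ s.2.2 = γ)

/-- Probabilistic outcome independence. -/
def ProbOutcomeIndependence {n : ℕ} {A B C : Type} [Fintype A] [Fintype B] [Fintype C]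
    (𝕏 : ((Fin n → A) × (Fin n → B) × C) → ℝ) : Prop :=
  ∀ (i : Fin n) (a : Fin n → A) (b : Fin n → B) (γ : C),
    marg 𝕏 (fun s => (∀ j, s.1 j = a j) ∧ s.2.1 i = b i ∧ s.2.2 = γ) *
        marg 𝕏 (fun s => (∀ j, s.1 j = a j) ∧ (∀ j, j ≠ i → s.2.1 j = b j) ∧ s.2.2 = γ) =
      marg 𝕏 (fun s => (∀ j, s.1 j = a j) ∧ (∀ j, s.2.1 j = b j) ∧ s.2.2 = γ) *
        marg 𝕏 (fun s => (∀ j, s.1 j = a j) ∧ s.2.2 = γ)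

section Aux
variable {Ω : Type} [Fintype Ω] (𝕏 : Ω → ℝ)

lemma marg_congr {φ ψ : Ω → Prop} (h : ∀ s, φ s ↔ ψ s) : marg 𝕏 φ = marg 𝕏 ψ := by
  have : φ = ψ := funext fun s => propext (h s)
  rw [this]

open Classical in
lemma marg_eq_sum_ite (φ : Ω → Prop) : marg 𝕏 φ = ∑ s, if φ s then 𝕏 s else 0 := by
  rw [marg, Finset.sum_filter]

lemma marg_fiber {σ : Type} [Fintype σ] (φ : Ω → Prop) (f : Ω → σ) :
    ∑ t, marg 𝕏 (fun s => φ s ∧ f s = t) = marg 𝕏 φ := by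
  classical
  simp only [marg_eq_sum_ite]
  rw [Finset.sum_comm]
  refine Finset.sum_congr rfl fun s _ => ?_
  by_cases h : φ s <;> simp [h]

end Aux

section Main
variable {n : ℕ} {A B C : Type} [Fintype A] [Fintype B] [Fintype C]
variable (𝕏 : ((Fin n → A) × (Fin n → B) × C) → ℝ)

lemma sumB (i : Fin n) (α : A) (γ : C) :
    ∑ β : B, marg 𝕏 (fun s => s.1 i = α ∧ s.2.1 i = β ∧ s.2.2 = γ) =
      marg 𝕏 (fun s => s.1 i = α ∧ s.2.2 = γ) := by
  rw [← marg_fiber 𝕏 (fun s => s.1 i = α ∧ s.2.2 = γ) (fun s => s.2.1 i)]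
  exact Finset.sum_congr rfl fun β _ => marg_congr 𝕏 (by tauto)

lemma prod_erase_eq_subtype (i : Fin n) (h : Fin n → ℝ) :
    ∏ j ∈ Finset.univ.erase i, h j = ∏ j : {j : Fin n // j ≠ i}, h j.1 :=
  Finset.prod_subtype _ (by simp) _

lemma sum_prod_subtype (i : Fin n) (g : {j : Fin n // j ≠ i} → B → ℝ) :
    ∑ t : {j : Fin n // j ≠ i} → B, ∏ j, g j (t j) = ∏ j, ∑ β, g j β := by
  classical
  rw [← Finset.sum_prod_piFinset Finset.univ g, Fintype.piFinset_univ]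

lemma locSum (hloc : ProbLocality 𝕏) (i : Fin n) (a : Fin n → A) (β : B) (γ : C) :
    marg 𝕏 (fun s => (∀ j, s.1 j = a j) ∧ s.2.1 i = β ∧ s.2.2 = γ) *
        ∏ j, marg 𝕏 (fun s => s.1 j = a j ∧ s.2.2 = γ) =
      marg 𝕏 (fun s => (∀ j, s.1 j = a j) ∧ s.2.2 = γ) *
        (marg 𝕏 (fun s => s.1 i = a i ∧ s.2.1 i = β ∧ s.2.2 = γ) *
          ∏ j ∈ Finset.univ.erase i, marg 𝕏 (fun s => s.1 j = a j ∧ s.2.2 = γ)) := by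
  classical
  set e : ({j : Fin n // j ≠ i} → B) → (Fin n → B) :=
    fun t j => if h : j = i then β else t ⟨j, h⟩ with he
  have key : ∀ t, marg 𝕏 (fun s => (∀ j, s.1 j = a j) ∧ (∀ j, s.2.1 j = e t j) ∧ s.2.2 = γ) *
      ∏ j, marg 𝕏 (fun s => s.1 j = a j ∧ s.2.2 = γ) =
      marg 𝕏 (fun s => (∀ j, s.1 j = a j) ∧ s.2.2 = γ) *
        ∏ j, marg 𝕏 (fun s => s.1 j = a j ∧ s.2.1 j = e t j ∧ s.2.2 = γ) :=
    fun t => hloc a (e t) γ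
  have hsumEq := Finset.sum_congr rfl (fun t (_ : t ∈ Finset.univ) => key t)
  -- LHS of summed equation
  have hL : ∑ t, marg 𝕏 (fun s => (∀ j, s.1 j = a j) ∧ (∀ j, s.2.1 j = e t j) ∧ s.2.2 = γ) *
      ∏ j, marg 𝕏 (fun s => s.1 j = a j ∧ s.2.2 = γ) =
      (marg 𝕏 (fun s => (∀ j, s.1 j = a j) ∧ s.2.1 i = β ∧ s.2.2 = γ)) *
      ∏ j, marg 𝕏 (fun s => s.1 j = a j ∧ s.2.2 = γ) := by
    rw [← Finset.sum_mul]
    congr 1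
    rw [← marg_fiber 𝕏 (fun s => (∀ j, s.1 j = a j) ∧ s.2.1 i = β ∧ s.2.2 = γ)
      (fun s => (fun j : {j : Fin n // j ≠ i} => s.2.1 j.1))]
    refine Finset.sum_congr rfl fun t _ => marg_congr 𝕏 fun s => ?_
    constructor
    · rintro ⟨hx, hy, hz⟩
      refine ⟨⟨hx, ?_, hz⟩, funext fun j => ?_⟩
      · have := hy i; simpa [he] using this
      · have := hy j.1; simpa [he, j.2] using this
    · rintro ⟨⟨hx, hβ, hz⟩, hf⟩
      refine ⟨hx, fun j => ?_, hz⟩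
      by_cases h : j = i
      · subst h; simpa [he] using hβ
      · have := congrFun hf ⟨j, h⟩
        simpa [he, h] using this
  -- RHS of summed equation
  have hR : ∑ t, marg 𝕏 (fun s => (∀ j, s.1 j = a j) ∧ s.2.2 = γ) *
      ∏ j, marg 𝕏 (fun s => s.1 j = a j ∧ s.2.1 j = e t j ∧ s.2.2 = γ) =
      marg 𝕏 (fun s => (∀ j, s.1 j = a j) ∧ s.2.2 = γ) *
        (marg 𝕏 (fun s => s.1 i = a i ∧ s.2.1 i = β ∧ s.2.2 = γ) *
          ∏ j ∈ Finset.univ.erase i, marg 𝕏 (fun s => s.1 j = a j ∧ s.2.2 = γ)) := by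
    rw [← Finset.mul_sum]
    congr 1
    have hprod : ∀ t, ∏ j, marg 𝕏 (fun s => s.1 j = a j ∧ s.2.1 j = e t j ∧ s.2.2 = γ) =
        marg 𝕏 (fun s => s.1 i = a i ∧ s.2.1 i = β ∧ s.2.2 = γ) *
          ∏ j : {j : Fin n // j ≠ i},
            marg 𝕏 (fun s => s.1 j.1 = a j.1 ∧ s.2.1 j.1 = t j ∧ s.2.2 = γ) := by
      intro t
      rw [← Finset.mul_prod_erase Finset.univ _ (Finset.mem_univ i),
        prod_erase_eq_subtype]
      congr 1
      · apply marg_congr; intro s; simp [he]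
      · exact Finset.prod_congr rfl fun j _ => by
          apply marg_congr; intro s; simp [he, j.2]
    calc ∑ t, ∏ j, marg 𝕏 (fun s => s.1 j = a j ∧ s.2.1 j = e t j ∧ s.2.2 = γ)
        = ∑ t : {j : Fin n // j ≠ i} → B,
            marg 𝕏 (fun s => s.1 i = a i ∧ s.2.1 i = β ∧ s.2.2 = γ) *
            ∏ j : {j : Fin n // j ≠ i},
              marg 𝕏 (fun s => s.1 j.1 = a j.1 ∧ s.2.1 j.1 = t j ∧ s.2.2 = γ) :=
          Finset.sum_congr rfl fun t _ => hprod t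
      _ = marg 𝕏 (fun s => s.1 i = a i ∧ s.2.1 i = β ∧ s.2.2 = γ) *
            ∑ t : {j : Fin n // j ≠ i} → B, ∏ j : {j : Fin n // j ≠ i},
              marg 𝕏 (fun s => s.1 j.1 = a j.1 ∧ s.2.1 j.1 = t j ∧ s.2.2 = γ) := by
          rw [Finset.mul_sum]
      _ = _ := by
          rw [sum_prod_subtype i
            (fun (j : {j : Fin n // j ≠ i}) (β' : B) =>
              marg 𝕏 (fun s => s.1 j.1 = a j.1 ∧ s.2.1 j.1 = β' ∧ s.2.2 = γ))]
          congr 1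
          rw [prod_erase_eq_subtype]
          exact Finset.prod_congr rfl fun j _ => sumB 𝕏 j.1 (a j.1) γ
  rw [hL, hR] at hsumEq
  exact hsumEq

lemma marg_nonneg {Ω : Type} [Fintype Ω] (𝕏 : Ω → ℝ) (hpos : ∀ s, 0 ≤ 𝕏 s) (φ : Ω → Prop) :
    0 ≤ marg 𝕏 φ :=
  Finset.sum_nonneg fun s _ => hpos s

lemma marg_mono {Ω : Type} [Fintype Ω] (𝕏 : Ω → ℝ) (hpos : ∀ s, 0 ≤ 𝕏 s) {φ ψ : Ω → Prop}
    (h : ∀ s, φ s → ψ s) : marg 𝕏 φ ≤ marg 𝕏 ψ := by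
  classical
  unfold marg
  apply Finset.sum_le_sum_of_subset_of_nonneg
  · intro s hs
    simp only [Finset.mem_filter, Finset.mem_univ, true_and] at *
    exact h s hs
  · intro s _ _; exact hpos s

lemma marg_eq_zero {Ω : Type} [Fintype Ω] (𝕏 : Ω → ℝ) (hpos : ∀ s, 0 ≤ 𝕏 s) {φ ψ : Ω → Prop}
    (h : ∀ s, φ s → ψ s) (hz : marg 𝕏 ψ = 0) : marg 𝕏 φ = 0 :=
  le_antisymm (hz ▸ marg_mono 𝕏 hpos h) (marg_nonneg 𝕏 hpos φ)

lemma loc_to_PI (hpos : ∀ s, 0 ≤ 𝕏 s) (hloc : ProbLocality 𝕏) :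
    ProbParameterIndependence 𝕏 := by
  intro i a β γ
  classical
  have h := locSum 𝕏 hloc i a β γ
  set K := ∏ j ∈ Finset.univ.erase i, marg 𝕏 (fun s => s.1 j = a j ∧ s.2.2 = γ) with hK
  by_cases hK0 : K = 0
  · obtain ⟨j, hj, hj0⟩ := Finset.prod_eq_zero_iff.mp hK0
    have hPa : marg 𝕏 (fun s => (∀ j, s.1 j = a j) ∧ s.2.2 = γ) = 0 :=
      marg_eq_zero 𝕏 hpos (fun s hs => ⟨hs.1 j, hs.2⟩) hj0
    have hPaβ : marg 𝕏 (fun s => (∀ j, s.1 j = a j) ∧ s.2.1 i = β ∧ s.2.2 = γ) = 0 :=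
      marg_eq_zero 𝕏 hpos (fun s hs => ⟨hs.1 j, hs.2.2⟩) hj0
    rw [hPa, hPaβ]; ring
  · apply mul_right_cancel₀ hK0
    have hM : ∏ j, marg 𝕏 (fun s => s.1 j = a j ∧ s.2.2 = γ) =
        marg 𝕏 (fun s => s.1 i = a i ∧ s.2.2 = γ) * K := by
      rw [hK]; exact (Finset.mul_prod_erase Finset.univ _ (Finset.mem_univ i)).symm
    rw [hM] at h
    linear_combination -h

lemma locSumUpd (hloc : ProbLocality 𝕏) (i : Fin n) (a : Fin n → A) (b : Fin n → B) (γ : C) :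
    marg 𝕏 (fun s => (∀ j, s.1 j = a j) ∧ (∀ j, j ≠ i → s.2.1 j = b j) ∧ s.2.2 = γ) *
        ∏ j, marg 𝕏 (fun s => s.1 j = a j ∧ s.2.2 = γ) =
      marg 𝕏 (fun s => (∀ j, s.1 j = a j) ∧ s.2.2 = γ) *
        (marg 𝕏 (fun s => s.1 i = a i ∧ s.2.2 = γ) *
          ∏ j ∈ Finset.univ.erase i,
            marg 𝕏 (fun s => s.1 j = a j ∧ s.2.1 j = b j ∧ s.2.2 = γ)) := by
  classical
  have key : ∀ β : B,
      marg 𝕏 (fun s => (∀ j, s.1 j = a j) ∧ (∀ j, s.2.1 j = Function.update b i β j) ∧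
          s.2.2 = γ) * ∏ j, marg 𝕏 (fun s => s.1 j = a j ∧ s.2.2 = γ) =
      marg 𝕏 (fun s => (∀ j, s.1 j = a j) ∧ s.2.2 = γ) *
        ∏ j, marg 𝕏 (fun s => s.1 j = a j ∧ s.2.1 j = Function.update b i β j ∧ s.2.2 = γ) :=
    fun β => hloc a (Function.update b i β) γ
  have hsumEq := Finset.sum_congr rfl (fun β (_ : β ∈ Finset.univ) => key β)
  have hL : ∑ β : B,
      marg 𝕏 (fun s => (∀ j, s.1 j = a j) ∧ (∀ j, s.2.1 j = Function.update b i β j) ∧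
          s.2.2 = γ) * ∏ j, marg 𝕏 (fun s => s.1 j = a j ∧ s.2.2 = γ) =
      marg 𝕏 (fun s => (∀ j, s.1 j = a j) ∧ (∀ j, j ≠ i → s.2.1 j = b j) ∧ s.2.2 = γ) *
        ∏ j, marg 𝕏 (fun s => s.1 j = a j ∧ s.2.2 = γ) := by
    rw [← Finset.sum_mul]
    congr 1
    rw [← marg_fiber 𝕏
      (fun s => (∀ j, s.1 j = a j) ∧ (∀ j, j ≠ i → s.2.1 j = b j) ∧ s.2.2 = γ)
      (fun s => s.2.1 i)]
    refine Finset.sum_congr rfl fun β _ => marg_congr 𝕏 fun s => ?_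
    constructor
    · rintro ⟨hx, hy, hz⟩
      refine ⟨⟨hx, fun j hj => ?_, hz⟩, ?_⟩
      · have := hy j; rwa [Function.update_of_ne hj] at this
      · have := hy i; rwa [Function.update_self] at this
    · rintro ⟨⟨hx, hy, hz⟩, hβ⟩
      refine ⟨hx, fun j => ?_, hz⟩
      by_cases hj : j = i
      · subst hj; rwa [Function.update_self]
      · rw [Function.update_of_ne hj]; exact hy j hj
  have hR : ∑ β : B, marg 𝕏 (fun s => (∀ j, s.1 j = a j) ∧ s.2.2 = γ) *
      ∏ j, marg 𝕏 (fun s => s.1 j = a j ∧ s.2.1 j = Function.update b i β j ∧ s.2.2 = γ) =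
      marg 𝕏 (fun s => (∀ j, s.1 j = a j) ∧ s.2.2 = γ) *
        (marg 𝕏 (fun s => s.1 i = a i ∧ s.2.2 = γ) *
          ∏ j ∈ Finset.univ.erase i,
            marg 𝕏 (fun s => s.1 j = a j ∧ s.2.1 j = b j ∧ s.2.2 = γ)) := by
    rw [← Finset.mul_sum]
    congr 1
    have hprod : ∀ β : B,
        ∏ j, marg 𝕏 (fun s => s.1 j = a j ∧ s.2.1 j = Function.update b i β j ∧ s.2.2 = γ) =
        marg 𝕏 (fun s => s.1 i = a i ∧ s.2.1 i = β ∧ s.2.2 = γ) *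
          ∏ j ∈ Finset.univ.erase i,
            marg 𝕏 (fun s => s.1 j = a j ∧ s.2.1 j = b j ∧ s.2.2 = γ) := by
      intro β
      rw [← Finset.mul_prod_erase Finset.univ _ (Finset.mem_univ i)]
      congr 1
      · apply marg_congr; intro s; rw [Function.update_self]
      · refine Finset.prod_congr rfl fun j hj => ?_
        apply marg_congr; intro s
        rw [Function.update_of_ne (Finset.mem_erase.mp hj).1]
    rw [Finset.sum_congr rfl (fun β (_ : β ∈ Finset.univ) => hprod β), ← Finset.sum_mul,
      sumB 𝕏 i (a i) γ]
  rw [hL, hR] at hsumEq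
  exact hsumEq

lemma loc_to_OI (hpos : ∀ s, 0 ≤ 𝕏 s) (hloc : ProbLocality 𝕏) :
    ProbOutcomeIndependence 𝕏 := by
  intro i a b γ
  classical
  have h1 := locSumUpd 𝕏 hloc i a b γ
  have h2 := locSum 𝕏 hloc i a (b i) γ
  have h3 := hloc a b γ
  set M := ∏ j, marg 𝕏 (fun s => s.1 j = a j ∧ s.2.2 = γ) with hMdef
  by_cases hM : M = 0
  · obtain ⟨j, hj, hj0⟩ := Finset.prod_eq_zero_iff.mp (hMdef ▸ hM)
    have hX1 : marg 𝕏 (fun s => (∀ j, s.1 j = a j) ∧ s.2.1 i = b i ∧ s.2.2 = γ) = 0 :=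
      marg_eq_zero 𝕏 hpos (fun s hs => ⟨hs.1 j, hs.2.2⟩) hj0
    have hPab : marg 𝕏 (fun s => (∀ j, s.1 j = a j) ∧ (∀ j, s.2.1 j = b j) ∧ s.2.2 = γ) = 0 :=
      marg_eq_zero 𝕏 hpos (fun s hs => ⟨hs.1 j, hs.2.2⟩) hj0
    rw [hX1, hPab]; ring
  · have hM2 : M * M ≠ 0 := mul_ne_zero hM hM
    apply mul_right_cancel₀ hM2
    have h4 : M = marg 𝕏 (fun s => s.1 i = a i ∧ s.2.2 = γ) *
        ∏ j ∈ Finset.univ.erase i, marg 𝕏 (fun s => s.1 j = a j ∧ s.2.2 = γ) := by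
      rw [hMdef]; exact (Finset.mul_prod_erase Finset.univ _ (Finset.mem_univ i)).symm
    have hL : ∏ j, marg 𝕏 (fun s => s.1 j = a j ∧ s.2.1 j = b j ∧ s.2.2 = γ) =
        marg 𝕏 (fun s => s.1 i = a i ∧ s.2.1 i = b i ∧ s.2.2 = γ) *
          ∏ j ∈ Finset.univ.erase i,
            marg 𝕏 (fun s => s.1 j = a j ∧ s.2.1 j = b j ∧ s.2.2 = γ) :=
      (Finset.mul_prod_erase Finset.univ _ (Finset.mem_univ i)).symm
    rw [hL] at h3
    set Pa := marg 𝕏 (fun s => (∀ j, s.1 j = a j) ∧ s.2.2 = γ)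
    set Li := marg 𝕏 (fun s => s.1 i = a i ∧ s.2.1 i = b i ∧ s.2.2 = γ)
    set Ki := marg 𝕏 (fun s => s.1 i = a i ∧ s.2.2 = γ)
    set K := ∏ j ∈ Finset.univ.erase i, marg 𝕏 (fun s => s.1 j = a j ∧ s.2.2 = γ)
    set R := ∏ j ∈ Finset.univ.erase i,
      marg 𝕏 (fun s => s.1 j = a j ∧ s.2.1 j = b j ∧ s.2.2 = γ)
    set X1 := marg 𝕏 (fun s => (∀ j, s.1 j = a j) ∧ s.2.1 i = b i ∧ s.2.2 = γ)
    set X2 := marg 𝕏 (fun s => (∀ j, s.1 j = a j) ∧ (∀ j, j ≠ i → s.2.1 j = b j) ∧ s.2.2 = γ)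
    set Pab := marg 𝕏 (fun s => (∀ j, s.1 j = a j) ∧ (∀ j, s.2.1 j = b j) ∧ s.2.2 = γ)
    linear_combination (X2 * M) * h2 + (Pa * Li * K) * h1 - (Pa * M) * h3 -
      (Pa ^ 2 * Li * R) * h4

lemma OIsum (hOI : ProbOutcomeIndependence 𝕏) (i : Fin n) (a : Fin n → A) (b : Fin n → B)
    (γ : C) (S : Finset (Fin n)) (hi : i ∈ S) :
    marg 𝕏 (fun s => (∀ j, s.1 j = a j) ∧ s.2.1 i = b i ∧ s.2.2 = γ) *
        marg 𝕏 (fun s => (∀ j, s.1 j = a j) ∧ (∀ j ∈ S.erase i, s.2.1 j = b j) ∧ s.2.2 = γ) =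
      marg 𝕏 (fun s => (∀ j, s.1 j = a j) ∧ (∀ j ∈ S, s.2.1 j = b j) ∧ s.2.2 = γ) *
        marg 𝕏 (fun s => (∀ j, s.1 j = a j) ∧ s.2.2 = γ) := by
  classical
  set e : ({j : Fin n // j ∉ S} → B) → (Fin n → B) :=
    fun t j => if h : j ∈ S then b j else t ⟨j, h⟩ with he
  have key : ∀ t,
      marg 𝕏 (fun s => (∀ j, s.1 j = a j) ∧ s.2.1 i = b i ∧ s.2.2 = γ) *
        marg 𝕏 (fun s => (∀ j, s.1 j = a j) ∧ (∀ j, j ≠ i → s.2.1 j = e t j) ∧ s.2.2 = γ) =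
      marg 𝕏 (fun s => (∀ j, s.1 j = a j) ∧ (∀ j, s.2.1 j = e t j) ∧ s.2.2 = γ) *
        marg 𝕏 (fun s => (∀ j, s.1 j = a j) ∧ s.2.2 = γ) := by
    intro t
    have h := hOI i a (e t) γ
    have hei : e t i = b i := by simp [he, hi]
    rwa [hei] at h
  have hsumEq := Finset.sum_congr rfl (fun t (_ : t ∈ Finset.univ) => key t)
  have hL : ∑ t : {j : Fin n // j ∉ S} → B,
      marg 𝕏 (fun s => (∀ j, s.1 j = a j) ∧ s.2.1 i = b i ∧ s.2.2 = γ) *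
        marg 𝕏 (fun s => (∀ j, s.1 j = a j) ∧ (∀ j, j ≠ i → s.2.1 j = e t j) ∧ s.2.2 = γ) =
      marg 𝕏 (fun s => (∀ j, s.1 j = a j) ∧ s.2.1 i = b i ∧ s.2.2 = γ) *
        marg 𝕏 (fun s => (∀ j, s.1 j = a j) ∧ (∀ j ∈ S.erase i, s.2.1 j = b j) ∧
          s.2.2 = γ) := by
    rw [← Finset.mul_sum]
    congr 1
    rw [← marg_fiber 𝕏
      (fun s => (∀ j, s.1 j = a j) ∧ (∀ j ∈ S.erase i, s.2.1 j = b j) ∧ s.2.2 = γ)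
      (fun s => (fun j : {j : Fin n // j ∉ S} => s.2.1 j.1))]
    refine Finset.sum_congr rfl fun t _ => marg_congr 𝕏 fun s => ?_
    constructor
    · rintro ⟨hx, hy, hz⟩
      refine ⟨⟨hx, fun j hj => ?_, hz⟩, funext fun j => ?_⟩
      · obtain ⟨hji, hjS⟩ := Finset.mem_erase.mp hj
        have := hy j hji; simpa [he, hjS] using this
      · have hji : j.1 ≠ i := fun h => j.2 (h ▸ hi)
        have := hy j.1 hji
        simpa [he, j.2] using this
    · rintro ⟨⟨hx, hy, hz⟩, hf⟩
      refine ⟨hx, fun j hji => ?_, hz⟩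
      by_cases hjS : j ∈ S
      · have := hy j (Finset.mem_erase.mpr ⟨hji, hjS⟩)
        simpa [he, hjS] using this
      · have := congrFun hf ⟨j, hjS⟩
        simpa [he, hjS] using this
  have hR : ∑ t : {j : Fin n // j ∉ S} → B,
      marg 𝕏 (fun s => (∀ j, s.1 j = a j) ∧ (∀ j, s.2.1 j = e t j) ∧ s.2.2 = γ) *
        marg 𝕏 (fun s => (∀ j, s.1 j = a j) ∧ s.2.2 = γ) =
      marg 𝕏 (fun s => (∀ j, s.1 j = a j) ∧ (∀ j ∈ S, s.2.1 j = b j) ∧ s.2.2 = γ) *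
        marg 𝕏 (fun s => (∀ j, s.1 j = a j) ∧ s.2.2 = γ) := by
    rw [← Finset.sum_mul]
    congr 1
    rw [← marg_fiber 𝕏
      (fun s => (∀ j, s.1 j = a j) ∧ (∀ j ∈ S, s.2.1 j = b j) ∧ s.2.2 = γ)
      (fun s => (fun j : {j : Fin n // j ∉ S} => s.2.1 j.1))]
    refine Finset.sum_congr rfl fun t _ => marg_congr 𝕏 fun s => ?_
    constructor
    · rintro ⟨hx, hy, hz⟩
      refine ⟨⟨hx, fun j hj => ?_, hz⟩, funext fun j => ?_⟩
      · have := hy j; simpa [he, hj] using this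
      · have := hy j.1; simpa [he, j.2] using this
    · rintro ⟨⟨hx, hy, hz⟩, hf⟩
      refine ⟨hx, fun j => ?_, hz⟩
      by_cases hjS : j ∈ S
      · have := hy j hjS; simpa [he, hjS] using this
      · have := congrFun hf ⟨j, hjS⟩
        simpa [he, hjS] using this
  rw [hL, hR] at hsumEq
  exact hsumEq

lemma OIprod (hOI : ProbOutcomeIndependence 𝕏) (a : Fin n → A) (b : Fin n → B) (γ : C)
    (S : Finset (Fin n)) :
    marg 𝕏 (fun s => (∀ j, s.1 j = a j) ∧ (∀ j ∈ S, s.2.1 j = b j) ∧ s.2.2 = γ) *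
        marg 𝕏 (fun s => (∀ j, s.1 j = a j) ∧ s.2.2 = γ) ^ S.card =
      marg 𝕏 (fun s => (∀ j, s.1 j = a j) ∧ s.2.2 = γ) *
        ∏ j ∈ S, marg 𝕏 (fun s => (∀ j', s.1 j' = a j') ∧ s.2.1 j = b j ∧ s.2.2 = γ) := by
  classical
  induction S using Finset.induction_on with
  | empty =>
    simp only [Finset.card_empty, pow_zero, mul_one, Finset.prod_empty]
    apply marg_congr; intro s; simp
  | @insert i S hiS ih =>
    have g := OIsum 𝕏 hOI i a b γ (insert i S) (Finset.mem_insert_self i S)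
    rw [Finset.erase_insert hiS] at g
    rw [Finset.prod_insert hiS, Finset.card_insert_of_notMem hiS, pow_succ]
    set Pa := marg 𝕏 (fun s => (∀ j, s.1 j = a j) ∧ s.2.2 = γ)
    set X1 := marg 𝕏 (fun s => (∀ j', s.1 j' = a j') ∧ s.2.1 i = b i ∧ s.2.2 = γ)
    linear_combination X1 * ih - Pa ^ S.card * g

lemma PIOI_to_loc (hpos : ∀ s, 0 ≤ 𝕏 s) (hPI : ProbParameterIndependence 𝕏)
    (hOI : ProbOutcomeIndependence 𝕏) : ProbLocality 𝕏 := by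
  intro a b γ
  classical
  have hQ := OIprod 𝕏 hOI a b γ Finset.univ
  rw [Finset.card_univ, Fintype.card_fin] at hQ
  have hQu : marg 𝕏 (fun s => (∀ j, s.1 j = a j) ∧ (∀ j ∈ Finset.univ, s.2.1 j = b j) ∧
      s.2.2 = γ) = marg 𝕏 (fun s => (∀ j, s.1 j = a j) ∧ (∀ j, s.2.1 j = b j) ∧ s.2.2 = γ) :=
    marg_congr 𝕏 (by simp)
  rw [hQu] at hQ
  have hprod := Finset.prod_congr rfl (fun j (_ : j ∈ Finset.univ) => hPI j a (b j) γ)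
  rw [Finset.prod_mul_distrib, Finset.prod_mul_distrib, Finset.prod_const,
    Finset.card_univ, Fintype.card_fin] at hprod
  set Pa := marg 𝕏 (fun s => (∀ j, s.1 j = a j) ∧ s.2.2 = γ) with hPadef
  by_cases hPa : Pa = 0
  · have hPab : marg 𝕏 (fun s => (∀ j, s.1 j = a j) ∧ (∀ j, s.2.1 j = b j) ∧ s.2.2 = γ)
        = 0 := marg_eq_zero 𝕏 hpos (fun s hs => ⟨hs.1, hs.2.2⟩) (hPadef ▸ hPa)
    rw [hPab, hPa]; ring
  · apply mul_right_cancel₀ (pow_ne_zero n hPa)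
    linear_combination
      (∏ j, marg 𝕏 (fun s => s.1 j = a j ∧ s.2.2 = γ)) * hQ - Pa * hprod

end Main

/-- A probabilistic hidden-variable team supports probabilistic locality if and
only if it supports both probabilistic parameter independence and probabilistic
outcome independence. -/
theorem probLocality_iff_probParameterIndependence_and_probOutcomeIndependence
    {n : ℕ} (hn : 1 ≤ n) {A B C : Type}
    [Fintype A] [Fintype B] [Fintype C] [Nonempty A] [Nonempty B] [Nonempty C]
    (𝕏 : ((Fin n → A) × (Fin n → B) × C) → ℝ)
    (hpos : ∀ s, 0 ≤ 𝕏 s) (hsum : ∑ s, 𝕏 s = 1) :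
    ProbLocality 𝕏 ↔ ProbParameterIndependence 𝕏 ∧ ProbOutcomeIndependence 𝕏 := by
  constructor
  · intro hloc
    exact ⟨loc_to_PI 𝕏 hpos hloc, loc_to_OI 𝕏 hpos hloc⟩
  · rintro ⟨hPI, hOI⟩
    exact PIOI_to_loc 𝕏 hpos hPI hOI
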